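/- arXiv:1207.0935 — 2 statements merged into one kernel-verified Lean document; each statement's English description precedes it below -/
import Mathlib

section
/- Let F be a strategyproof 2-facility mechanism on the line with approximation ratio at most ρ for the social cost (sum of agents' distances to their nearest facility). Then for every instance x with three agents at locations x_i < x_j < x_k, the leftmost facility F_1(x) satisfies F_1(x) ≤ x_j and the rightmost facility F_2(x) satisfies F_2(x) ≥ x_j. -/
noncomputable section

/-- Cost of an agent at location `a` under a pair of facilities. -/
def fcost (a : ℝ) (y : ℝ × ℝ) : ℝ := min |a - y.1| |a - y.2|

/-- Social cost: sum of the agents' distances to their nearest facility. -/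
def scost {n : ℕ} (x : Fin n → ℝ) (y : ℝ × ℝ) : ℝ := ∑ i, fcost (x i) y

/-- Optimal social cost over all placements of two facilities. -/
def optCost {n : ℕ} (x : Fin n → ℝ) : ℝ := ⨅ y : ℝ × ℝ, scost x y

/-- The mechanism outputs its facilities in increasing order. -/
def Ordered {n : ℕ} (F : (Fin n → ℝ) → ℝ × ℝ) : Prop := ∀ x, (F x).1 ≤ (F x).2

/-- No agent can strictly decrease her cost by misreporting her location. -/
def Strategyproof {n : ℕ} (F : (Fin n → ℝ) → ℝ × ℝ) : Prop :=
  ∀ (x : Fin n → ℝ) (i : Fin n) (y : ℝ),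
    fcost (x i) (F x) ≤ fcost (x i) (F (Function.update x i y))

/-- `F` has approximation ratio (at most) `ρ` for the social cost. -/
def ApproxRatio {n : ℕ} (F : (Fin n → ℝ) → ℝ × ℝ) (ρ : ℝ) : Prop :=
  ∀ x, scost x (F x) ≤ ρ * optCost x

/-- An `(i|j,k)`-well-separated 3-agent instance. -/
def WellSep (ρ : ℝ) (x : Fin 3 → ℝ) (i j k : Fin 3) : Prop :=
  x i < x j ∧ x j < x k ∧ ρ * (x k - x j) < x j - x i

/-!
Move the outer agent `i` onto `x j`. The new instance has only two distinct locations, so its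
optimal cost is `0` and any mechanism with bounded approximation ratio must put a facility at
`x j`, at distance `x j - x i` from agent `i`'s true location. Strategyproofness then forces a
facility of `F x` within `x j - x i` of `x i`, hence `(F x).1 ≤ x j`; symmetrically for `k`.
-/

lemma fcost_nonneg (a : ℝ) (y : ℝ × ℝ) : 0 ≤ fcost a y :=
  le_min (abs_nonneg _) (abs_nonneg _)

lemma fcost_eq_zero_iff {a : ℝ} {y : ℝ × ℝ} : fcost a y = 0 ↔ y.1 = a ∨ y.2 = a := by
  simp only [fcost, min_eq_iff, abs_eq_zero, sub_eq_zero]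
  constructor
  · rintro (⟨h, -⟩ | ⟨h, -⟩)
    exacts [.inl h.symm, .inr h.symm]
  · rintro (h | h) <;> subst h <;> simp

lemma fcost_le_abs_sub_add (a b : ℝ) (y : ℝ × ℝ) : fcost a y ≤ |a - b| + fcost b y :=
  calc fcost a y ≤ min (|a - b| + |b - y.1|) (|a - b| + |b - y.2|) :=
        min_le_min (abs_sub_le a b y.1) (abs_sub_le a b y.2)
    _ = |a - b| + fcost b y := min_add_add_left _ _ _

lemma fst_le_add_of_fcost_le {a d : ℝ} {y : ℝ × ℝ} (hy : y.1 ≤ y.2) (h : fcost a y ≤ d) :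
    y.1 ≤ a + d := by
  rcases min_le_iff.mp h with h | h <;> linarith [(abs_le.mp h).1]

lemma sub_le_snd_of_fcost_le {a d : ℝ} {y : ℝ × ℝ} (hy : y.1 ≤ y.2) (h : fcost a y ≤ d) :
    a - d ≤ y.2 := by
  rcases min_le_iff.mp h with h | h <;> linarith [(abs_le.mp h).2]

lemma scost_nonneg {n : ℕ} (x : Fin n → ℝ) (y : ℝ × ℝ) : 0 ≤ scost x y :=
  Finset.sum_nonneg fun _ _ => fcost_nonneg _ _

lemma optCost_eq_zero_of_forall_eq_or_eq {n : ℕ} {x : Fin n → ℝ} {a b : ℝ}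
    (h : ∀ m, x m = a ∨ x m = b) : optCost x = 0 := by
  have hzero : scost x (a, b) = 0 :=
    Finset.sum_eq_zero fun m _ => fcost_eq_zero_iff.mpr ((h m).imp Eq.symm Eq.symm)
  refine le_antisymm ?_ (le_ciInf (scost_nonneg x))
  exact hzero ▸ ciInf_le ⟨0, fun _ ⟨y, hy⟩ => hy ▸ scost_nonneg x y⟩ (a, b)

lemma ApproxRatio.fcost_eq_zero {n : ℕ} {F : (Fin n → ℝ) → ℝ × ℝ} {ρ : ℝ}
    (happ : ApproxRatio F ρ) {x : Fin n → ℝ} (hx : optCost x = 0) (m : Fin n) :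
    fcost (x m) (F x) = 0 := by
  have hF : scost x (F x) = 0 :=
    le_antisymm (by simpa [hx] using happ x) (scost_nonneg x (F x))
  exact (Finset.sum_eq_zero_iff_of_nonneg fun _ _ => fcost_nonneg _ _).mp hF m
    (Finset.mem_univ m)

lemma Strategyproof.fcost_le_abs_sub {n : ℕ} {F : (Fin n → ℝ) → ℝ × ℝ}
    (hsp : Strategyproof F) {x : Fin n → ℝ} {i : Fin n} {a : ℝ}
    (ha : fcost a (F (Function.update x i a)) = 0) :
    fcost (x i) (F x) ≤ |x i - a| :=
  calc fcost (x i) (F x) ≤ fcost (x i) (F (Function.update x i a)) := hsp x i a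
    _ ≤ |x i - a| + fcost a (F (Function.update x i a)) := fcost_le_abs_sub_add _ _ _
    _ = |x i - a| := by rw [ha, add_zero]

lemma Fin.three_cases {i j k : Fin 3} (hij : i ≠ j) (hik : i ≠ k) (hjk : j ≠ k) (m : Fin 3) :
    m = i ∨ m = j ∨ m = k := by
  revert i j k m; decide

lemma update_fin_three_eq_or_eq {α : Type*} (x : Fin 3 → α) {i j k : Fin 3}
    (hij : i ≠ j) (hik : i ≠ k) (hjk : j ≠ k) (m : Fin 3) :
    Function.update x i (x j) m = x j ∨ Function.update x i (x j) m = x k := by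
  rcases Fin.three_cases hij hik hjk m with rfl | rfl | rfl
  · simp
  · simp [Function.update_of_ne hij.symm]
  · simp [Function.update_of_ne hik.symm]

lemma Strategyproof.fcost_le_abs_sub_of_fin_three {F : (Fin 3 → ℝ) → ℝ × ℝ} {ρ : ℝ}
    (hsp : Strategyproof F) (happ : ApproxRatio F ρ) (x : Fin 3 → ℝ) {i j k : Fin 3}
    (hij : i ≠ j) (hik : i ≠ k) (hjk : j ≠ k) :
    fcost (x i) (F x) ≤ |x i - x j| := by
  have hopt := optCost_eq_zero_of_forall_eq_or_eq (update_fin_three_eq_or_eq x hij hik hjk)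
  have hj := happ.fcost_eq_zero hopt j
  rw [Function.update_of_ne hij.symm] at hj
  exact hsp.fcost_le_abs_sub hj

theorem middle_general (F : (Fin 3 → ℝ) → ℝ × ℝ) (ρ : ℝ)
    (hord : Ordered F) (hsp : Strategyproof F) (happ : ApproxRatio F ρ)
    (x : Fin 3 → ℝ) (i j k : Fin 3)
    (hij : i ≠ j) (hik : i ≠ k) (hjk : j ≠ k)
    (h1 : x i < x j) (h2 : x j < x k) :
    (F x).1 ≤ x j ∧ x j ≤ (F x).2 := by
  have hi := hsp.fcost_le_abs_sub_of_fin_three happ x hij hik hjk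
  have hk := hsp.fcost_le_abs_sub_of_fin_three happ x hjk.symm hik.symm hij.symm
  rw [abs_of_neg (sub_neg.mpr h1)] at hi
  rw [abs_of_pos (sub_pos.mpr h2)] at hk
  constructor
  · linarith [fst_le_add_of_fcost_le (hord x) hi]
  · linarith [sub_le_snd_of_fcost_le (hord x) hk]

/-- Proposition "middle": for any 3-agent instance with `x_i < x_j < x_k`,
the leftmost facility is at most `x_j` and the rightmost facility is at
least `x_j`. -/
theorem middle (F : (Fin 3 → ℝ) → ℝ × ℝ) (ρ : ℝ) (hρ : 1 ≤ ρ)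
    (hord : Ordered F) (hsp : Strategyproof F) (happ : ApproxRatio F ρ)
    (x : Fin 3 → ℝ) (i j k : Fin 3)
    (hij : i ≠ j) (hik : i ≠ k) (hjk : j ≠ k)
    (h1 : x i < x j) (h2 : x j < x k) :
    (F x).1 ≤ x j ∧ x j ≤ (F x).2 :=
  middle_general F ρ hord hsp happ x i j k hij hik hjk h1 h2
end
end

section
/- Let F be a strategyproof 2-facility mechanism on the line with n ≥ 5 agents that satisfies the two-extremes/dictator dichotomy: either F always places facilities at (min x, max x), or there exists a unique agent j such that F always places a facility at x_j. Then the approximation ratio of F for the social cost is at least n − 2. -/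
noncomputable section

lemma fcost_swap (a : ℝ) (y : ℝ × ℝ) : fcost a y.swap = fcost a y :=
  min_comm _ _

lemma optCost_nonneg {n : ℕ} (x : Fin n → ℝ) : 0 ≤ optCost x :=
  le_ciInf (scost_nonneg x)

lemma optCost_le_scost {n : ℕ} (x : Fin n → ℝ) (y : ℝ × ℝ) : optCost x ≤ scost x y :=
  ciInf_le ⟨0, by rintro _ ⟨y, rfl⟩; exact scost_nonneg x y⟩ y

lemma mul_le_fcost_one_add_mul_fcost {m ε : ℝ} (hm : 0 ≤ m) (hε : 0 ≤ ε)
    (h : (m + 2) * ε ≤ 1) (w : ℝ) :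
    m * ε ≤ fcost 1 (0, w) + m * fcost ε (0, w) := by
  simp only [fcost, sub_zero, abs_one, abs_of_nonneg hε]
  have hfar : 0 ≤ min 1 |1 - w| := le_min zero_le_one (abs_nonneg _)
  have hnear : 0 ≤ min ε |ε - w| := le_min hε (abs_nonneg _)
  rcases le_or_gt ε |ε - w| with hserved | hclose
  · rw [min_eq_left hserved]
    linarith
  · have hw : w < 2 * ε := by linarith [(abs_lt.mp hclose).1]
    have : m * ε ≤ min 1 |1 - w| :=
      le_min (by nlinarith) (by linarith [le_abs_self (1 - w)])
    nlinarith

def threeClusterProfile {n : ℕ} (j k : Fin n) (ε : ℝ) : Fin n → ℝ :=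
  fun i => if i = j then 0 else if i = k then 1 else ε

lemma scost_threeClusterProfile {n : ℕ} {j k : Fin n} (hjk : j ≠ k) (ε : ℝ) (y : ℝ × ℝ) :
    scost (threeClusterProfile j k ε) y
      = fcost 0 y + fcost 1 y + ((n : ℝ) - 2) * fcost ε y := by
  have hk : k ∈ Finset.univ.erase j := Finset.mem_erase.mpr ⟨hjk.symm, Finset.mem_univ k⟩
  have hrest : ∑ i ∈ (Finset.univ.erase j).erase k, fcost (threeClusterProfile j k ε i) y
      = ∑ _i ∈ (Finset.univ.erase j).erase k, fcost ε y :=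
    Finset.sum_congr rfl fun i hi => by
      obtain ⟨hik, hij, -⟩ := Finset.mem_erase.mp hi |>.imp_right Finset.mem_erase.mp
      simp [threeClusterProfile, hij, hik]
  have hcard : (((Finset.univ.erase j).erase k).card : ℝ) = n - 2 := by
    rw [Finset.card_erase_of_mem hk, Finset.card_erase_of_mem (Finset.mem_univ j),
      Finset.card_univ, Fintype.card_fin, Nat.sub_sub, Nat.cast_sub (by omega)]
    push_cast
    ring
  rw [scost, ← Finset.add_sum_erase _ _ (Finset.mem_univ j), ← Finset.add_sum_erase _ _ hk,
    hrest, Finset.sum_const, nsmul_eq_mul, hcard]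
  simp [threeClusterProfile, hjk.symm]
  ring

lemma sInf_range_threeClusterProfile {n : ℕ} (j k : Fin n) {ε : ℝ} (hε : 0 ≤ ε) :
    sInf (Set.range (threeClusterProfile j k ε)) = 0 := by
  refine IsLeast.csInf_eq ⟨⟨j, by simp [threeClusterProfile]⟩, ?_⟩
  rintro _ ⟨i, rfl⟩
  unfold threeClusterProfile
  split_ifs <;> norm_num [hε]

lemma mul_le_scost_threeClusterProfile {n : ℕ} {j k : Fin n} (hjk : j ≠ k) {ε : ℝ} (hε : 0 ≤ ε)
    (hnε : n * ε ≤ 1) (hn : 2 ≤ n) {y : ℝ × ℝ} (hy : y.1 = 0 ∨ y.2 = 0) :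
    ((n : ℝ) - 2) * ε ≤ scost (threeClusterProfile j k ε) y := by
  obtain ⟨w, hw⟩ : ∃ w, ∀ a, fcost a y = fcost a (0, w) := by
    rcases hy with h | h
    · exact ⟨y.2, fun a => by rw [← h]⟩
    · exact ⟨y.1, fun a => by rw [← fcost_swap, ← h]; rfl⟩
  have hn' : (2 : ℝ) ≤ n := by exact_mod_cast hn
  rw [scost_threeClusterProfile hjk, hw 1, hw ε]
  linarith [fcost_nonneg 0 y,
    mul_le_fcost_one_add_mul_fcost (sub_nonneg.mpr hn') hε (by linarith) w]

lemma optCost_threeClusterProfile_le {n : ℕ} {j k : Fin n} (hjk : j ≠ k) {ε : ℝ} (hε : 0 ≤ ε)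
    (hε1 : ε ≤ 1) : optCost (threeClusterProfile j k ε) ≤ ε :=
  (optCost_le_scost _ (ε, 1)).trans_eq <| by
    simp [scost_threeClusterProfile hjk, fcost, abs_of_nonneg hε, hε1]

lemma sub_two_le_of_fst_eq_zero_or_snd_eq_zero {n : ℕ} (hn : 2 < n)
    {F : (Fin n → ℝ) → ℝ × ℝ} {ρ : ℝ} (happ : ApproxRatio F ρ) {j k : Fin n} (hjk : j ≠ k)
    (hF : (F (threeClusterProfile j k (1 / n))).1 = 0 ∨
      (F (threeClusterProfile j k (1 / n))).2 = 0) :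
    (n : ℝ) - 2 ≤ ρ := by
  set ε : ℝ := 1 / n
  set x := threeClusterProfile j k ε
  have hn' : (2 : ℝ) < n := by exact_mod_cast hn
  have hε : 0 < ε := by positivity
  have hnε : n * ε = 1 := mul_one_div_cancel (zero_lt_two.trans hn').ne'
  have hcost : ((n : ℝ) - 2) * ε ≤ ρ * optCost x :=
    (mul_le_scost_threeClusterProfile hjk hε.le hnε.le hn.le hF).trans (happ x)
  have hopt := optCost_threeClusterProfile_le hjk hε.le (by nlinarith)
  rcases lt_or_ge ρ 0 with hρ | hρ
  · nlinarith [optCost_nonneg x]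
  · exact le_of_mul_le_mul_right (hcost.trans (mul_le_mul_of_nonneg_left hopt hρ)) hε

theorem approx_ge_n_sub_two_general (n : ℕ) (hn : 5 ≤ n) (F : (Fin n → ℝ) → ℝ × ℝ)
    (hdich : (∀ x : Fin n → ℝ, F x = (sInf (Set.range x), sSup (Set.range x))) ∨
      (∃! j : Fin n, ∀ x : Fin n → ℝ, (F x).1 = x j ∨ (F x).2 = x j))
    (ρ : ℝ) (happ : ApproxRatio F ρ) :
    (n : ℝ) - 2 ≤ ρ := by
  have : Nontrivial (Fin n) := Fin.nontrivial_iff_two_le.mpr (by omega)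
  obtain ⟨j, k, hjk, hF⟩ : ∃ j k : Fin n, j ≠ k ∧
      ((F (threeClusterProfile j k (1 / n))).1 = 0 ∨
        (F (threeClusterProfile j k (1 / n))).2 = 0) := by
    rcases hdich with hext | ⟨j, hj, -⟩
    · obtain ⟨j, k, hjk⟩ := exists_pair_ne (Fin n)
      refine ⟨j, k, hjk, Or.inl ?_⟩
      rw [hext, sInf_range_threeClusterProfile j k (by positivity)]
    · obtain ⟨k, hkj⟩ := exists_ne j
      have hx : threeClusterProfile j k (1 / n) j = 0 := if_pos rfl
      exact ⟨j, k, hkj.symm, hx ▸ hj _⟩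
  exact sub_two_le_of_fst_eq_zero_or_snd_eq_zero (by omega) happ hjk hF

/-- Any strategyproof 2-facility mechanism with `n ≥ 5` agents satisfying the
two-extremes/dictator dichotomy has approximation ratio at least `n - 2`. -/
theorem approx_ge_n_sub_two (n : ℕ) (hn : 5 ≤ n) (F : (Fin n → ℝ) → ℝ × ℝ)
    (hord : Ordered F) (hsp : Strategyproof F)
    (hdich : (∀ x : Fin n → ℝ, F x = (sInf (Set.range x), sSup (Set.range x))) ∨
      (∃! j : Fin n, ∀ x : Fin n → ℝ, (F x).1 = x j ∨ (F x).2 = x j))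
    (ρ : ℝ) (happ : ApproxRatio F ρ) :
    (n : ℝ) - 2 ≤ ρ :=
  approx_ge_n_sub_two_general n hn F hdich ρ happ
end
end
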